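/- Let f(z) = ∑_{n,m=0}^∞ A_{n,m} z̄ⁿ zᵐ / √(n! m!) where (A_{n,m}) is a bounded complex matrix (|A_{n,m}| ≤ C for all n,m). If f(z) = 0 for all z ∈ ℂ, then A_{n,m} = 0 for all n, m. -/

import Mathlib

/-!
Write `a_{n,m} = A_{n,m} / √(n! m!)` and put `z = t u` with `t` real and `|u| = 1`. Grouping
the absolutely convergent double series by total degree gives a power series in `t` with
coefficients `c_k(u) = ∑_{n+m=k} a_{n,m} ūⁿ uᵐ`, so every `c_k(u)` vanishes. Since `ū = u⁻¹` on the circle,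
`uᵏ c_k(u) = ∑_{n+m=k} a_{n,m} u^{2m}` is a polynomial in `u` with infinitely many roots, hence its
coefficients `a_{n,m}` vanish.
-/

open Finset Polynomial ComplexConjugate Nat

theorem Real.summable_pow_div_sqrt_factorial (r : ℝ) :
    Summable fun n : ℕ => r ^ n / √(n ! : ℝ) := by
  refine Summable.of_norm_bounded (((Real.summable_pow_div_factorial (2 * r ^ 2)).add
    summable_geometric_two).div_const 2) fun n => ?_
  set s := √(n ! : ℝ)
  have hs : 0 < s := by positivity
  have hfact : (n ! : ℝ) = s ^ 2 := (Real.sq_sqrt (by positivity)).symm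
  -- AM-GM: `2 x ≤ 2ⁿ x² + 2⁻ⁿ` for `x = |r|ⁿ / √n!`
  have hamgm : ((2 : ℝ) ^ n * (|r| ^ n) ^ 2 / s ^ 2 + 1 / 2 ^ n) / 2 - |r| ^ n / s
      = (2 ^ n * |r| ^ n - s) ^ 2 / (2 * 2 ^ n * s ^ 2) := by
    field_simp
    ring
  have hsq : 0 ≤ (2 ^ n * |r| ^ n - s) ^ 2 / (2 * 2 ^ n * s ^ 2) := by positivity
  rw [norm_div, norm_pow, Real.norm_eq_abs, Real.norm_of_nonneg hs.le, hfact, mul_pow,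
    ← sq_abs r, ← pow_mul, mul_comm 2 n, pow_mul, one_div_pow]
  linarith

theorem HasSum.sum_antidiagonal {A α : Type*} [AddMonoid A] [HasAntidiagonal A]
    [AddCommMonoid α] [TopologicalSpace α] [ContinuousAdd α] [RegularSpace α]
    {f : A × A → α} {a : α} (hf : HasSum f a) :
    HasSum (fun n => ∑ p ∈ antidiagonal n, f p) a :=
  (HasAntidiagonal.sigmaAntidiagonalEquivProd.hasSum_iff.mpr hf).sigma fun n =>
    (antidiagonal n).hasSum f

theorem eq_zero_of_forall_hasSum_pow_smul {𝕜 E : Type*} [NontriviallyNormedField 𝕜]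
    [NormedAddCommGroup E] [NormedSpace 𝕜 E] {c : ℕ → E}
    (h : ∀ t : 𝕜, HasSum (fun n => t ^ n • c n) 0) : c = 0 := by
  let p : FormalMultilinearSeries 𝕜 𝕜 E := fun n =>
    ContinuousMultilinearMap.mkPiRing 𝕜 (Fin n) (c n)
  have hp : ∀ n t, p n (fun _ => t) = t ^ n • c n := by simp [p]
  have hradius : (1 : ENNReal) ≤ p.radius := by
    refine p.le_radius_of_tendsto (l := 0) ?_
    simpa [p] using (h 1).summable.tendsto_atTop_zero.norm
  have hseries : HasFPowerSeriesOnBall 0 p 0 1 :=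
    ⟨hradius, one_pos, fun {y} _ => by simpa [hp] using h y⟩
  have hp0 := hseries.hasFPowerSeriesAt.eq_zero
  funext n
  simpa [hp] using congr(($hp0 n) fun _ => 1)

theorem sum_antidiagonal_mul_conj_pow_mul_pow_eq_zero {a : ℕ → ℕ → ℂ}
    (h : ∀ z : ℂ, HasSum (fun p : ℕ × ℕ => a p.1 p.2 * conj z ^ p.1 * z ^ p.2) 0)
    (u : ℂ) (k : ℕ) : ∑ p ∈ antidiagonal k, a p.1 p.2 * conj u ^ p.1 * u ^ p.2 = 0 := by
  have hseries : ∀ t : ℝ, HasSum (fun n =>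
      t ^ n • ∑ p ∈ antidiagonal n, a p.1 p.2 * conj u ^ p.1 * u ^ p.2) 0 := by
    intro t
    convert (h (t * u)).sum_antidiagonal using 2 with n
    rw [smul_sum]
    refine sum_congr rfl fun p hp => ?_
    rw [← mem_antidiagonal.mp hp, map_mul, Complex.conj_ofReal, Complex.real_smul]
    push_cast
    ring
  exact congrFun (eq_zero_of_forall_hasSum_pow_smul hseries) k

theorem eq_zero_of_sum_antidiagonal_eq_zero_on_circle {b : ℕ × ℕ → ℂ} {k : ℕ}
    (h : ∀ u : ℂ, ‖u‖ = 1 → ∑ p ∈ antidiagonal k, b p * conj u ^ p.1 * u ^ p.2 = 0) :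
    ∀ p ∈ antidiagonal k, b p = 0 := by
  let Q : ℂ[X] := ∑ p ∈ antidiagonal k, C (b p) * X ^ (2 * p.2)
  have hQ : ∀ u : ℂ, ‖u‖ = 1 →
      Q.eval u = u ^ k * ∑ p ∈ antidiagonal k, b p * conj u ^ p.1 * u ^ p.2 := by
    intro u hu
    have hu0 : u ≠ 0 := norm_ne_zero_iff.mp (hu.trans_ne one_ne_zero)
    simp only [Q, eval_finsetSum, eval_mul, eval_C, eval_pow, eval_X, mul_sum,
      ← RCLike.inv_eq_conj hu]
    refine sum_congr rfl fun p hp => ?_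
    rw [← mem_antidiagonal.mp hp, inv_pow]
    field_simp
    ring
  have hcircle : (Metric.sphere (0 : ℂ) 1).Infinite :=
    (isPreconnected_sphere (by simp [Complex.rank_real_complex]) 0 1).infinite_of_nontrivial
      ⟨1, by simp, -1, by simp, by norm_num⟩
  have hQ0 : Q = 0 := Q.eq_zero_of_infinite_isRoot <| hcircle.mono fun u hu => by
    rw [mem_sphere_zero_iff_norm] at hu
    simp [hQ u hu, h u hu]
  intro p hp
  have hcoeff := congr(coeff $hQ0 (2 * p.2))
  rw [finsetSum_coeff, sum_eq_single p] at hcoeff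
  · simpa using hcoeff
  · intro q hq hqp
    rw [HasAntidiagonal.mem_antidiagonal] at hp hq
    rw [coeff_C_mul_X_pow, if_neg fun hqp2 => hqp (Prod.ext (by omega) (by omega))]
  · exact fun hp' => absurd hp hp'

theorem eq_zero_of_forall_hasSum_conj_pow_mul_pow {a : ℕ → ℕ → ℂ}
    (h : ∀ z : ℂ, HasSum (fun p : ℕ × ℕ => a p.1 p.2 * conj z ^ p.1 * z ^ p.2) 0) (n m : ℕ) :
    a n m = 0 :=
  eq_zero_of_sum_antidiagonal_eq_zero_on_circle (b := fun p => a p.1 p.2)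
    (fun u _ => sum_antidiagonal_mul_conj_pow_mul_pow_eq_zero h u (n + m)) (n, m)
    (HasAntidiagonal.mem_antidiagonal.mpr rfl)

theorem summable_mul_conj_pow_mul_pow_div_sqrt_factorial {A : ℕ → ℕ → ℂ} {C : ℝ}
    (hC : ∀ n m, ‖A n m‖ ≤ C) (z : ℂ) :
    Summable fun p : ℕ × ℕ =>
      A p.1 p.2 * conj z ^ p.1 * z ^ p.2 / ((√(p.1 ! * p.2 !) : ℝ) : ℂ) := by
  have hg := Summable.mul_of_nonneg (Real.summable_pow_div_sqrt_factorial ‖z‖)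
    (Real.summable_pow_div_sqrt_factorial ‖z‖) (fun _ => by positivity) (fun _ => by positivity)
  refine Summable.of_norm_bounded (hg.mul_left C) fun p => ?_
  rw [norm_div, norm_mul, norm_mul, norm_pow, norm_pow, RCLike.norm_conj, Complex.norm_real,
    Real.norm_of_nonneg (Real.sqrt_nonneg _), Real.sqrt_mul (by positivity)]
  calc ‖A p.1 p.2‖ * ‖z‖ ^ p.1 * ‖z‖ ^ p.2 / (√(p.1 ! : ℝ) * √(p.2 ! : ℝ))
      ≤ C * ‖z‖ ^ p.1 * ‖z‖ ^ p.2 / (√(p.1 ! : ℝ) * √(p.2 ! : ℝ)) := by gcongr; exact hC _ _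
    _ = _ := by ring

/-- If `f(z) = ∑_{n,m} A_{n,m} z̄ⁿ zᵐ / √(n! m!)` vanishes for all `z ∈ ℂ`, where the
matrix `(A_{n,m})` is bounded (`‖A n m‖ ≤ C`), then every `A_{n,m}` is zero. -/
theorem stmt1 (A : ℕ → ℕ → ℂ) (C : ℝ) (hC : ∀ n m, ‖A n m‖ ≤ C)
    (h : ∀ z : ℂ,
      (∑' p : ℕ × ℕ,
        A p.1 p.2 * (starRingEnd ℂ z) ^ p.1 * z ^ p.2 /
          ((Real.sqrt (Nat.factorial p.1 * Nat.factorial p.2) : ℝ) : ℂ)) = 0) :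
    ∀ n m, A n m = 0 := by
  intro n m
  have hsum : ∀ z : ℂ, HasSum (fun p : ℕ × ℕ =>
      A p.1 p.2 / ((√(p.1 ! * p.2 !) : ℝ) : ℂ) * conj z ^ p.1 * z ^ p.2) 0 := fun z => by
    convert (summable_mul_conj_pow_mul_pow_div_sqrt_factorial hC z).hasSum_iff.mpr (h z) using 2
    ring
  have hsqrt : ((√(n ! * m !) : ℝ) : ℂ) ≠ 0 := by
    exact_mod_cast (Real.sqrt_pos.mpr (by positivity)).ne'
  have hscaled := eq_zero_of_forall_hasSum_conj_pow_mul_pow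
    (a := fun n m => A n m / ((√(n ! * m !) : ℝ) : ℂ)) hsum n m
  exact (div_eq_zero_iff.mp hscaled).resolve_right hsqrt
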